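/- Let L ≥ 2, x ∈ {1,…,L−1} with x ∤ L, and write x̂ = L mod x. If a ∈ {0,…,2^L−1} satisfies a ⋘_L x = a, then the x-bit word A = Σ_{i=0}^{x−1} a_i·2^i satisfies A ⋘_x x̂ = A (a reduction of the fixed-shift equation to a smaller block length). -/

import Mathlib

/-- L-bit left circular shift of `a` by `x`. -/
def rotl (L : ℕ) (x : ℤ) (a : ℕ) : ℕ :=
  ∑ i ∈ Finset.range L, if a.testBit i then 2 ^ ((((i : ℤ) + x) % (L : ℤ)).toNat) else 0

/-- L-bit right circular shift of `a` by `x`. -/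
def rotr (L : ℕ) (x : ℤ) (a : ℕ) : ℕ := rotl L (-x) a

/-!
Index the bits of `a` by `ℤ` through `k ↦ a_(k mod L)`. The equation `a ⋘_L x = a` says exactly
that this function is `x`-periodic. Being also `L`-periodic, it is then `(L mod x)`-periodic, and
being `x`-periodic it coincides with the corresponding function of `A = a mod 2^x` at block length
`x`. Reading the first equivalence backwards at block length `x` gives `A ⋘_x (L mod x) = A`.
-/

open Finset Function

theorem Nat.testBit_sum_two_pow (s : Finset ℕ) (k : ℕ) :
    (∑ i ∈ s, 2 ^ i).testBit k ↔ k ∈ s := by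
  rw [← Nat.mem_bitIndices, ← List.mem_toFinset, Finset.toFinset_bitIndices_sum_two_pow]

theorem Int.toNat_emod_lt {L : ℕ} (hL : 0 < L) (z : ℤ) : (z % (L : ℤ)).toNat < L := by
  have := Int.emod_lt_of_pos z (Int.natCast_pos.2 hL)
  omega

theorem Int.natCast_toNat_emod {L : ℕ} (hL : 0 < L) (z : ℤ) :
    ((z % (L : ℤ)).toNat : ℤ) = z % L :=
  Int.toNat_of_nonneg (Int.emod_nonneg _ (by omega))

theorem Int.toNat_emod_sub_toNat_emod_add {L i : ℕ} (hL : 0 < L) (hi : i < L) (x : ℤ) :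
    ((((((i : ℤ) + x) % L).toNat : ℤ) - x) % L).toNat = i := by
  rw [Int.natCast_toNat_emod hL, Int.sub_emod, Int.emod_emod_of_dvd _ dvd_rfl, ← Int.sub_emod,
    add_sub_cancel_right, Int.emod_eq_of_lt (by omega) (by omega), Int.toNat_natCast]

def cyclicBits (L a : ℕ) (k : ℤ) : Bool := a.testBit (k % L).toNat

section cyclicBits

variable {L a : ℕ}

theorem cyclicBits_natCast {j : ℕ} (hj : j < L) : cyclicBits L a j = a.testBit j := by
  rw [cyclicBits, Int.emod_eq_of_lt (by omega) (by omega), Int.toNat_natCast]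

theorem periodic_cyclicBits : Periodic (cyclicBits L a) L := fun k => by
  simp only [cyclicBits, Int.add_emod_right]

theorem cyclicBits_emod (k : ℤ) : cyclicBits L a (k % L) = cyclicBits L a k := by
  simp only [cyclicBits, Int.emod_emod]

theorem cyclicBits_emod_add (k y : ℤ) : cyclicBits L a (k % L + y) = cyclicBits L a (k + y) := by
  rw [Int.emod_def, sub_add_eq_add_sub, mul_comm]
  exact periodic_cyclicBits.sub_int_mul_eq _

theorem testBit_rotl (x : ℤ) (k : ℕ) :
    (rotl L x a).testBit k = (decide (k < L) && cyclicBits L a (k - x)) := by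
  rcases Nat.eq_zero_or_pos L with rfl | hL
  · simp [rotl]
  have hreindex : rotl L x a = ∑ j ∈ range L with cyclicBits L a (((j : ℕ) : ℤ) - x), 2 ^ j := by
    rw [rotl, sum_filter]
    refine sum_nbij' (fun i => (((i : ℤ) + x) % L).toNat) (fun j => (((j : ℤ) - x) % L).toNat)
      (fun _ _ => mem_range.2 (Int.toNat_emod_lt hL _))
      (fun _ _ => mem_range.2 (Int.toNat_emod_lt hL _))
      (fun i hi => Int.toNat_emod_sub_toNat_emod_add hL (mem_range.1 hi) x)
      (fun j hj => by simpa [sub_eq_add_neg] using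
        Int.toNat_emod_sub_toNat_emod_add hL (mem_range.1 hj) (-x))
      (fun i hi => ?_)
    rw [cyclicBits, Int.toNat_emod_sub_toNat_emod_add hL (mem_range.1 hi)]
  rw [hreindex, Bool.eq_iff_iff, Nat.testBit_sum_two_pow]
  simp

theorem periodic_cyclicBits_iff (hL : 0 < L) (x : ℤ) :
    Periodic (cyclicBits L a) x ↔ ∀ j < L, cyclicBits L a (j - x) = a.testBit j := by
  refine ⟨fun h j hj => by rw [h.sub_eq, cyclicBits_natCast hj], fun h k => ?_⟩
  obtain ⟨j, hjL, hj⟩ : ∃ j < L, (j : ℤ) = (k + x) % L :=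
    ⟨_, Int.toNat_emod_lt hL _, Int.natCast_toNat_emod hL _⟩
  calc cyclicBits L a (k + x) = cyclicBits L a j := by rw [hj, cyclicBits_emod]
    _ = cyclicBits L a (j - x) := by rw [h j hjL, cyclicBits_natCast hjL]
    _ = cyclicBits L a k := by rw [hj, sub_eq_add_neg, cyclicBits_emod_add, add_neg_cancel_right]

theorem rotl_eq_self_iff (hL : 0 < L) (ha : a < 2 ^ L) (x : ℤ) :
    rotl L x a = a ↔ Periodic (cyclicBits L a) x := by
  rw [periodic_cyclicBits_iff hL]
  refine ⟨fun h j hj => ?_, fun h => Nat.eq_of_testBit_eq fun j => ?_⟩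
  · simpa [testBit_rotl, hj] using congrArg (Nat.testBit · j) h
  rw [testBit_rotl]
  by_cases hj : j < L
  · simp [hj, h j hj]
  · have hbit : a.testBit j = false :=
      Nat.testBit_eq_false_of_lt (ha.trans_le (Nat.pow_le_pow_right two_pos (not_lt.1 hj)))
    simp [hj, hbit]

theorem cyclicBits_mod_two_pow {x : ℕ} (hx : 0 < x) (hxL : x ≤ L)
    (h : Periodic (cyclicBits L a) x) : cyclicBits x (a % 2 ^ x) = cyclicBits L a := by
  funext k
  have hk := Int.toNat_emod_lt hx k
  rw [cyclicBits, Nat.testBit_mod_two_pow, decide_eq_true hk, Bool.true_and,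
    ← cyclicBits_natCast (hk.trans_le hxL), Int.natCast_toNat_emod hx, Int.emod_def, mul_comm]
  exact h.sub_int_mul_eq _

end cyclicBits

theorem stmt19_general (L x : ℕ) (hx1 : 1 ≤ x) (hx2 : x ≤ L - 1)
    (a : ℕ) (ha : a < 2 ^ L) (hfix : rotl L (x : ℤ) a = a) :
    rotl x ((L % x : ℕ) : ℤ) (a % 2 ^ x) = a % 2 ^ x := by
  have hx : 0 < x := hx1
  have hperiodic := (rotl_eq_self_iff (by omega) ha x).1 hfix
  rw [rotl_eq_self_iff hx (Nat.mod_lt _ (by positivity)),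
    cyclicBits_mod_two_pow hx (by omega) hperiodic, Int.natCast_mod, Int.emod_def, mul_comm]
  exact periodic_cyclicBits.sub_period (hperiodic.int_mul _)

theorem stmt19 (L x : ℕ) (hL : 2 ≤ L) (hx1 : 1 ≤ x) (hx2 : x ≤ L - 1) (hndvd : ¬ x ∣ L)
    (a : ℕ) (ha : a < 2 ^ L) (hfix : rotl L (x : ℤ) a = a) :
    rotl x ((L % x : ℕ) : ℤ) (a % 2 ^ x) = a % 2 ^ x :=
  stmt19_general L x hx1 hx2 a ha hfix
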